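/- Well-formedness of P\ℋ: if H̄₁ and H̄₂ are two high level PEPA components neither of which shares any action type with any derivative of P (i.e., for all P' ∈ ds(P), 𝒜(P') ∩ 𝒜(H̄ᵢ) = ∅ for i = 1,2), then the derivation graphs of P ⊲⊳_ℋ H̄₁ and P ⊲⊳_ℋ H̄₂ are isomorphic (there is a bijection between their derivative sets preserving transitions together with their action types and rates). -/

import Mathlib

open scoped ENNReal Classical

/-- Action types: a countable set with a distinguished silent type `tau`. -/
inductive Act : Type where
  | tau : Act
  | vis : ℕ → Act
deriving DecidableEq

/-- PEPA components: prefix `(α,r).P`, choice `P+Q`, cooperation `P ⊲⊳_L Q`,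
hiding `P/L`, and constants `A` (given by an environment of defining equations).
Rates live in `ℝ≥0∞` (positive reals together with the unspecified symbol `⊤`). -/
inductive Proc : Type where
  | pre : Act → ℝ≥0∞ → Proc → Proc
  | choice : Proc → Proc → Proc
  | coop : Proc → Set Act → Proc → Proc
  | hide : Proc → Set Act → Proc
  | const : ℕ → Proc

namespace PEPA

/-- Fuelled conditional transition rate `qF E n P α P'`: the total rate
(with multiplicities) of the `α`-transitions from `P` to `P'` in the
multi-transition system given by the operational semantics of Table 1,
computed with `n` units of fuel for unfolding constants.
The shared-activity (cooperation) rule uses the apparent rates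
`r_α(P) = ∑' X, qF E n P α X` as in
`R = (r₁/r_α(P)) · (r₂/r_α(Q)) · min(r_α(P), r_α(Q))`. -/
noncomputable def qF (E : ℕ → Proc) : ℕ → Proc → Act → Proc → ℝ≥0∞
  | 0, _, _, _ => 0
  | n+1, .pre β r P, α, X => if β = α ∧ X = P then r else 0
  | n+1, .choice P Q, α, X => qF E n P α X + qF E n Q α X
  | n+1, .hide P L, α, X =>
      match X with
      | .hide P' L' =>
          if L' = L then
            if α = .tau then qF E n P .tau P' + ∑' β : L, qF E n P β P'
            else if α ∈ L then 0 else qF E n P α P'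
          else 0
      | _ => 0
  | n+1, .coop P L Q, α, X =>
      match X with
      | .coop P' L' Q' =>
          if L' = L then
            if α ∈ L then
              (qF E n P α P' / ∑' Y, qF E n P α Y) * (qF E n Q α Q' / ∑' Y, qF E n Q α Y)
                * min (∑' Y, qF E n P α Y) (∑' Y, qF E n Q α Y)
            else
              (if Q' = Q then qF E n P α P' else 0) + (if P' = P then qF E n Q α Q' else 0)
          else 0
      | _ => 0
  | n+1, .const c, α, X => qF E n (E c) α X

/-- `q E P α P'` : the (total) conditional transition rate from `P` to `P'`
via action type `α`, i.e. the sum of the rates over all transitions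
`P --(α,r)--> P'` of the multi-transition system. -/
noncomputable def q (E : ℕ → Proc) (P : Proc) (α : Act) (P' : Proc) : ℝ≥0∞ :=
  ⨆ n, qF E n P α P'

/-- Total conditional transition rate `q[P,S,α] = Σ_{P'∈S} q(P,P',α)`. -/
noncomputable def qTo (E : ℕ → Proc) (P : Proc) (S : Set Proc) (α : Act) : ℝ≥0∞ :=
  ∑' P' : S, q E P α P'

/-- One step of the derivation graph: `P` has some transition to `P'`. -/
def Step (E : ℕ → Proc) (P P' : Proc) : Prop := ∃ α, q E P α P' ≠ 0

/-- The derivative set `ds(P)`: the set of states reachable from `P`. -/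
def ds (E : ℕ → Proc) (P : Proc) : Set Proc :=
  {P' | Relation.ReflTransGen (Step E) P P'}

/-- `𝒜(P)`: the set of current action types of `P`. -/
def curTypes (E : ℕ → Proc) (P : Proc) : Set Act :=
  {α | ∃ P', q E P α P' ≠ 0}

/-- The set of equivalence classes `𝒞/ℛ` of a relation `ℛ`. -/
def eqCls (R : Proc → Proc → Prop) : Set (Set Proc) :=
  {S | ∃ P, S = {Q | R P Q}}

/-- A lumpable bisimulation: an equivalence relation `R` such that whenever
`R P Q`, then for all `α` and all classes `S` of `R` with either `α ≠ τ`, or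
`α = τ` and `P,Q ∉ S`, it holds that `q[P,S,α] = q[Q,S,α]`. -/
def IsLumpBisim (E : ℕ → Proc) (R : Proc → Proc → Prop) : Prop :=
  Equivalence R ∧
    ∀ P Q, R P Q → ∀ α, ∀ S ∈ eqCls R,
      (α ≠ Act.tau ∨ (P ∉ S ∧ Q ∉ S)) → qTo E P S α = qTo E Q S α

/-- Lumpable bisimilarity `≈_l`: the union of all lumpable bisimulations. -/
def lb (E : ℕ → Proc) (P Q : Proc) : Prop :=
  ∃ R, IsLumpBisim E R ∧ R P Q

section High

-- `Hs` is the set `ℋ` of high action types (the remaining visible types are low).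
variable (E : ℕ → Proc) (Hs : Set Act)

/-- A high level component: every derivative may next engage in high types only. -/
def IsHighComp (Hc : Proc) : Prop := ∀ H' ∈ ds E Hc, curTypes E H' ⊆ Hs

/-- The set `ℒ` of low action types. -/
def Low : Set Act := {α | α ∉ Hs ∧ α ≠ Act.tau}

/-- An inert component: a high level component performing no activity at all
(hence sharing no action type with any component). -/
def inert : Proc := .pre .tau 0 (.const 0)

/-- `P \ ℋ` : `P ⊲⊳_ℋ H̄` where `H̄` is a high level component that does not
cooperate with `P` (it shares no action types with the derivatives of `P`). -/
def restr (P : Proc) : Proc := .coop P Hs inert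

/-- The high context `C[_] = (_ ⊲⊳_ℋ Hc)/ℋ` applied to `P`. -/
def hctx (Hc P : Proc) : Proc := .hide (.coop P Hs Hc) Hs

/-- Stochastic Non-Interference: `P\ℋ ≈_l (P ⊲⊳_ℋ H)/ℋ` for every high `H`. -/
def SNI (P : Proc) : Prop :=
  ∀ Hc, IsHighComp E Hs Hc → lb E (restr Hs P) (hctx Hs Hc P)

/-- Persistent Stochastic Non-Interference: every derivative of `P` satisfies SNI. -/
def PSNI (P : Proc) : Prop := ∀ P' ∈ ds E P, SNI E Hs P'

/-- `q_C(P,P',α)`: the sum of the rates over all transitions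
`C[P] --(α,r)--> C'[P']` (with `C'[_]` ranging over high contexts). -/
noncomputable def qC (Hc P : Proc) (α : Act) (P' : Proc) : ℝ≥0∞ :=
  ∑' Hc' : Proc, q E (hctx Hs Hc P) α (hctx Hs Hc' P')

/-- `q_C[P,S,α] = Σ_{P'∈S} q_C(P,P',α)`. -/
noncomputable def qCTo (Hc P : Proc) (S : Set Proc) (α : Act) : ℝ≥0∞ :=
  ∑' P' : S, qC E Hs Hc P α P'

/-- A lumpable bisimulation on high contexts. -/
def IsLumpBisimHC (R : Proc → Proc → Prop) : Prop :=
  Equivalence R ∧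
    ∀ P Q, R P Q → ∀ Hc, IsHighComp E Hs Hc → ∀ α, ∀ S ∈ eqCls R,
      (α ≠ Act.tau ∨ (P ∉ S ∧ Q ∉ S)) →
        qCTo E Hs Hc P S α = qCTo E Hs Hc Q S α

/-- Lumpable bisimilarity on high contexts `≈_l^hc`. -/
def lbhc (P Q : Proc) : Prop := ∃ R, IsLumpBisimHC E Hs R ∧ R P Q

/-- A lumpable bisimulation up to `ℋ`. -/
def IsLumpBisimUpto (R : Proc → Proc → Prop) : Prop :=
  Equivalence R ∧
    ∀ P Q, R P Q → ∀ α, ∀ S ∈ eqCls R,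
      ((α ∉ Hs ∧ α ≠ Act.tau) → qTo E P S α = qTo E Q S α) ∧
      ((α ∈ Hs ∨ α = Act.tau) → P ∉ S → Q ∉ S → qTo E P S α = qTo E Q S α)

/-- Lumpable bisimilarity up to `ℋ`, written `≈_l^ℋ`. -/
def lbUpto (P Q : Proc) : Prop := ∃ R, IsLumpBisimUpto E Hs R ∧ R P Q

end High

end PEPA

/-
A high level component `H` only offers types in `ℋ`, which is the cooperation set, so it can never
move on its own; and it cannot synchronise with a derivative of `P` either, since they share no
action type, so every shared activity gets rate `0`. Hence `H` stays frozen in `P ⊲⊳_ℋ H`, whose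
transitions are exactly the non-high transitions of `P`, with the same rates. Both derivation
graphs are therefore copies of the graph of `P` restricted to non-high steps, and replacing `H̄₁`
by `H̄₂` is the isomorphism.
-/

namespace PEPA

variable {E : ℕ → Proc}

lemma q_eq_iSup_qF_succ (P : Proc) (α : Act) (X : Proc) :
    q E P α X = ⨆ n, qF E (n + 1) P α X := by
  rw [q, ← sup_iSup_nat_succ]
  simp [qF]

lemma qF_eq_zero_of_notMem_curTypes {P : Proc} {α : Act} (h : α ∉ curTypes E P) (n : ℕ)
    (X : Proc) : qF E n P α X = 0 :=
  ENNReal.iSup_eq_zero.mp (not_not.mp fun hX => h ⟨X, hX⟩) n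

section Cooperation

variable {P H : Proc} {L : Set Act}

lemma qF_succ_coop_coop (hH : curTypes E H ⊆ L) (hd : Disjoint (curTypes E P) (curTypes E H))
    (n : ℕ) (α : Act) (X : Proc) (L' : Set Act) (Y : Proc) :
    qF E (n + 1) (.coop P L H) α (.coop X L' Y) =
      if L' = L ∧ Y = H ∧ α ∉ L then qF E n P α X else 0 := by
  by_cases hL : L' = L
  swap
  · simp [qF, hL]
  subst hL
  by_cases hα : α ∈ L'
  · -- a shared type is a current type of at most one of the two partners
    have hzero : qF E n P α X = 0 ∨ qF E n H α Y = 0 := by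
      by_cases hαH : α ∈ curTypes E H
      · exact .inl (qF_eq_zero_of_notMem_curTypes (hd.notMem_of_mem_right hαH) n X)
      · exact .inr (qF_eq_zero_of_notMem_curTypes hαH n Y)
    rcases hzero with h | h <;> simp [qF, hα, h]
  · have hHα : qF E n H α Y = 0 := qF_eq_zero_of_notMem_curTypes (fun h => hα (hH h)) n Y
    rcases eq_or_ne Y H with rfl | hY
    · simp [qF, hα, hHα]
    · simp [qF, hα, hHα, hY]

lemma q_coop_coop (hH : curTypes E H ⊆ L) (hd : Disjoint (curTypes E P) (curTypes E H))
    (α : Act) (X : Proc) (L' : Set Act) (Y : Proc) :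
    q E (.coop P L H) α (.coop X L' Y) = if L' = L ∧ Y = H ∧ α ∉ L then q E P α X else 0 := by
  rw [q_eq_iSup_qF_succ]
  simp_rw [qF_succ_coop_coop hH hd]
  by_cases h : L' = L ∧ Y = H ∧ α ∉ L <;> simp [h, q]

lemma q_coop_coop_same_right (hH : curTypes E H ⊆ L)
    (hd : Disjoint (curTypes E P) (curTypes E H)) (α : Act) (X : Proc) :
    q E (.coop P L H) α (.coop X L H) = if α ∈ L then 0 else q E P α X := by
  by_cases hα : α ∈ L <;> simp [q_coop_coop hH hd, hα]

/-- The transitions of `P` that survive in `P ⊲⊳_L H` when `H` is high. -/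
def StepOutside (E : ℕ → Proc) (L : Set Act) (P P' : Proc) : Prop :=
  ∃ α ∉ L, q E P α P' ≠ 0

lemma mem_ds_of_reflTransGen_stepOutside {P' : Proc}
    (h : Relation.ReflTransGen (StepOutside E L) P P') : P' ∈ ds E P :=
  Relation.ReflTransGen.mono (p := Step E) (fun _ _ ⟨α, _, hq⟩ => ⟨α, hq⟩) _ _ h

lemma step_coop_iff (hH : curTypes E H ⊆ L) (hd : Disjoint (curTypes E P) (curTypes E H))
    (X : Proc) : Step E (.coop P L H) X ↔ ∃ P', StepOutside E L P P' ∧ X = .coop P' L H := by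
  constructor
  · rintro ⟨α, hq⟩
    cases X with
    | coop P' L' Y =>
      rw [q_coop_coop hH hd] at hq
      split_ifs at hq with h
      · obtain ⟨rfl, rfl, hα⟩ := h
        exact ⟨P', ⟨α, hα, hq⟩, rfl⟩
      · exact absurd rfl hq
    | _ => simp [q_eq_iSup_qF_succ, qF] at hq
  · rintro ⟨P', ⟨α, hα, hq⟩, rfl⟩
    exact ⟨α, by rwa [q_coop_coop hH hd, if_pos ⟨rfl, rfl, hα⟩]⟩

lemma mem_ds_coop_iff (hH : curTypes E H ⊆ L)
    (hd : ∀ P' ∈ ds E P, Disjoint (curTypes E P') (curTypes E H)) (X : Proc) :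
    X ∈ ds E (.coop P L H) ↔
      ∃ P', Relation.ReflTransGen (StepOutside E L) P P' ∧ X = .coop P' L H := by
  constructor
  · intro hX
    induction hX with
    | refl => exact ⟨P, .refl, rfl⟩
    | tail _ hstep ih =>
      obtain ⟨P', hP', rfl⟩ := ih
      obtain ⟨P'', hs, rfl⟩ :=
        (step_coop_iff hH (hd P' (mem_ds_of_reflTransGen_stepOutside hP')) _).mp hstep
      exact ⟨P'', hP'.tail hs, rfl⟩
  · rintro ⟨P', hP', rfl⟩
    induction hP' with
    | refl => exact .refl
    | @tail P' P'' hP' hs ih =>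
      exact ih.tail <|
        (step_coop_iff hH (hd P' (mem_ds_of_reflTransGen_stepOutside hP')) _).mpr ⟨P'', hs, rfl⟩

end Cooperation

def replaceRight (H : Proc) : Proc → Proc
  | .coop P L _ => .coop P L H
  | X => X

section Replace

variable {P H₁ H₂ : Proc} {L : Set Act}

lemma mapsTo_replaceRight (hH₁ : curTypes E H₁ ⊆ L)
    (hd₁ : ∀ P' ∈ ds E P, Disjoint (curTypes E P') (curTypes E H₁)) (hH₂ : curTypes E H₂ ⊆ L)
    (hd₂ : ∀ P' ∈ ds E P, Disjoint (curTypes E P') (curTypes E H₂)) :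
    Set.MapsTo (replaceRight H₂) (ds E (.coop P L H₁)) (ds E (.coop P L H₂)) := by
  intro X hX
  obtain ⟨P', hP', rfl⟩ := (mem_ds_coop_iff hH₁ hd₁ X).mp hX
  exact (mem_ds_coop_iff hH₂ hd₂ _).mpr ⟨P', hP', rfl⟩

lemma leftInvOn_replaceRight (hH₁ : curTypes E H₁ ⊆ L)
    (hd₁ : ∀ P' ∈ ds E P, Disjoint (curTypes E P') (curTypes E H₁)) :
    Set.LeftInvOn (replaceRight H₁) (replaceRight H₂) (ds E (.coop P L H₁)) := by
  intro X hX
  obtain ⟨P', -, rfl⟩ := (mem_ds_coop_iff hH₁ hd₁ X).mp hX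
  rfl

lemma bijOn_replaceRight (hH₁ : curTypes E H₁ ⊆ L)
    (hd₁ : ∀ P' ∈ ds E P, Disjoint (curTypes E P') (curTypes E H₁)) (hH₂ : curTypes E H₂ ⊆ L)
    (hd₂ : ∀ P' ∈ ds E P, Disjoint (curTypes E P') (curTypes E H₂)) :
    Set.BijOn (replaceRight H₂) (ds E (.coop P L H₁)) (ds E (.coop P L H₂)) :=
  Set.InvOn.bijOn ⟨leftInvOn_replaceRight hH₁ hd₁, leftInvOn_replaceRight hH₂ hd₂⟩
    (mapsTo_replaceRight hH₁ hd₁ hH₂ hd₂) (mapsTo_replaceRight hH₂ hd₂ hH₁ hd₁)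

lemma q_replaceRight (hH₁ : curTypes E H₁ ⊆ L)
    (hd₁ : ∀ P' ∈ ds E P, Disjoint (curTypes E P') (curTypes E H₁)) (hH₂ : curTypes E H₂ ⊆ L)
    (hd₂ : ∀ P' ∈ ds E P, Disjoint (curTypes E P') (curTypes E H₂)) {X Y : Proc}
    (hX : X ∈ ds E (.coop P L H₁)) (hY : Y ∈ ds E (.coop P L H₁)) (α : Act) :
    q E X α Y = q E (replaceRight H₂ X) α (replaceRight H₂ Y) := by
  obtain ⟨P₁, hP₁, rfl⟩ := (mem_ds_coop_iff hH₁ hd₁ X).mp hX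
  obtain ⟨P₂, -, rfl⟩ := (mem_ds_coop_iff hH₁ hd₁ Y).mp hY
  have hP₁ := mem_ds_of_reflTransGen_stepOutside hP₁
  simp only [replaceRight, q_coop_coop_same_right hH₁ (hd₁ P₁ hP₁),
    q_coop_coop_same_right hH₂ (hd₂ P₁ hP₁)]

end Replace

end PEPA

open PEPA

theorem restr_well_formed_general (E : ℕ → Proc) (Hs : Set Act)
    (P H1 H2 : Proc) (hH1 : IsHighComp E Hs H1) (hH2 : IsHighComp E Hs H2)
    (hd1 : ∀ P' ∈ ds E P, curTypes E P' ∩ curTypes E H1 = ∅)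
    (hd2 : ∀ P' ∈ ds E P, curTypes E P' ∩ curTypes E H2 = ∅) :
    ∃ φ : ds E (Proc.coop P Hs H1) ≃ ds E (Proc.coop P Hs H2),
      (φ ⟨Proc.coop P Hs H1, Relation.ReflTransGen.refl⟩ : Proc) = Proc.coop P Hs H2 ∧
      ∀ (X Y : ds E (Proc.coop P Hs H1)) (α : Act),
        q E (X : Proc) α (Y : Proc) = q E (φ X : Proc) α (φ Y : Proc) := by
  have hH1' : curTypes E H1 ⊆ Hs := hH1 H1 .refl
  have hH2' : curTypes E H2 ⊆ Hs := hH2 H2 .refl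
  have hd1' P' (h : P' ∈ ds E P) := Set.disjoint_iff_inter_eq_empty.mpr (hd1 P' h)
  have hd2' P' (h : P' ∈ ds E P) := Set.disjoint_iff_inter_eq_empty.mpr (hd2 P' h)
  refine ⟨(bijOn_replaceRight hH1' hd1' hH2' hd2').equiv, rfl, ?_⟩
  rintro ⟨X, hX⟩ ⟨Y, hY⟩ α
  exact q_replaceRight hH1' hd1' hH2' hd2' hX hY α

/-- **well-formedness of `P\ℋ`.** If `H̄₁` and `H̄₂` are high level
components sharing no action type with any derivative of `P`, then the derivation
graphs of `P ⊲⊳_ℋ H̄₁` and `P ⊲⊳_ℋ H̄₂` are isomorphic: there is a bijection between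
their derivative sets, mapping root to root, that preserves the transitions
together with their action types and (total conditional) rates. -/
theorem restr_well_formed (E : ℕ → Proc) (Hs : Set Act) (hτ : Act.tau ∉ Hs)
    (P H1 H2 : Proc) (hH1 : IsHighComp E Hs H1) (hH2 : IsHighComp E Hs H2)
    (hd1 : ∀ P' ∈ ds E P, curTypes E P' ∩ curTypes E H1 = ∅)
    (hd2 : ∀ P' ∈ ds E P, curTypes E P' ∩ curTypes E H2 = ∅) :
    ∃ φ : ds E (Proc.coop P Hs H1) ≃ ds E (Proc.coop P Hs H2),
      (φ ⟨Proc.coop P Hs H1, Relation.ReflTransGen.refl⟩ : Proc) = Proc.coop P Hs H2 ∧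
      ∀ (X Y : ds E (Proc.coop P Hs H1)) (α : Act),
        q E (X : Proc) α (Y : Proc) = q E (φ X : Proc) α (φ Y : Proc) :=
  restr_well_formed_general E Hs P H1 H2 hH1 hH2 hd1 hd2
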